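/- arXiv:2309.03751 — 5 statements merged into one kernel-verified Lean document; each statement's English description precedes it below -/
import Mathlib

section
/- The Average Medoid Silhouette is rich: for every finite set X with n ≥ 2 elements and every nonempty set of medoids M ⊊ X with |M| ≥ 2, there exists a dissimilarity d over X such that M is the unique maximizer of S̃(X, d, M') over all medoid sets M' of size |M|. -/
/-- distance from `x` to its `(n+1)`-th nearest medoid in `M` (0-indexed). -/
noncomputable def nthDist {X : Type*} (d : X → X → ℝ) (M : Finset X) (x : X) (n : ℕ) : ℝ :=
  ((M.val.map (d x)).sort (· ≤ ·)).getD n 0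

/-- Medoid Silhouette of a single point. -/
noncomputable def msil {X : Type*} (d : X → X → ℝ) (M : Finset X) (x : X) : ℝ :=
  if nthDist d M x 0 = 0 ∧ nthDist d M x 1 = 0 then 1
  else 1 - nthDist d M x 0 / nthDist d M x 1

/-- Average Medoid Silhouette. -/
noncomputable def AMS {X : Type*} [Fintype X] (d : X → X → ℝ) (M : Finset X) : ℝ :=
  (∑ x : X, msil d M x) / (Fintype.card X)

/-- `x ∼_M y`: x and y share a nearest medoid in `M`. -/
def simM {X : Type*} (d : X → X → ℝ) (M : Finset X) (x y : X) : Prop :=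
  ∃ m ∈ M, d x m = nthDist d M x 0 ∧ d y m = nthDist d M y 0


/-!
The witness puts the medoids at mutual distance `N = |X|`, the first medoid `m₁` at distance `1`
from every non-medoid, and every other pair of distinct points at distance `N²`. Under `M` each
medoid scores `1` and each non-medoid `1 - 1/N²`, so the total deficit `∑ (1 - s̃)` is below
`N · 1/N² = 1/N`. Any other `M'` of the same size misses some `y ∈ M`, whose distances to `M'`
all lie in `[1, N]` (if `y = m₁`) or in `[N, N²]` (otherwise); hence `s̃(y) ≤ 1 - 1/N` and the
deficit under `M'` is at least `1/N`. The intermediate level `N` is needed: for the dissimilarity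
that is `0` between `m₁` and the non-medoids and `1` elsewhere, `X = {m₁, m₂, a}`, `M = {m₁, m₂}`
and `M' = {m₂, a}` both have `S̃ = 1`.
-/

section NearestMedoids

variable {X : Type*} (d : X → X → ℝ) (M : Finset X) (x : X)

lemma exists_nthDist_zero_one (hM : 2 ≤ M.card) :
    ∃ a ∈ M, ∃ b ∈ M, b ≠ a ∧ nthDist d M x 0 = d x a ∧ nthDist d M x 1 = d x b ∧
      ∀ m ∈ M, d x a ≤ d x m := by
  classical
  obtain ⟨u, v, t, hsort⟩ : ∃ u v t, (M.val.map (d x)).sort (· ≤ ·) = u :: v :: t := by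
    have hlen := Multiset.length_sort (s := M.val.map (d x)) (r := (· ≤ ·))
    rw [Multiset.card_map, Finset.card_val] at hlen
    match h : (M.val.map (d x)).sort (· ≤ ·), hlen with
    | u :: v :: t, _ => exact ⟨u, v, t, rfl⟩
    | [], hlen | [_], hlen => simp only [List.length_nil, List.length_singleton] at hlen; omega
  have hsorted := Multiset.pairwise_sort (M.val.map (d x)) (· ≤ ·)
  rw [hsort, List.pairwise_cons] at hsorted
  obtain ⟨hu, -⟩ := hsorted
  have hmap : M.val.map (d x) = u ::ₘ v ::ₘ (t : Multiset ℝ) := by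
    rw [← Multiset.sort_eq (M.val.map (d x)) (· ≤ ·), hsort]; rfl
  obtain ⟨a, ha, hau, herase⟩ := (Multiset.map_eq_cons _ _ _ _).mpr hmap
  obtain ⟨b, hb, hbv⟩ := Multiset.mem_map.mp (herase ▸ Multiset.mem_cons_self v _)
  have hba : b ≠ a := (M.nodup.mem_erase_iff.mp hb).1
  refine ⟨a, ha, b, Multiset.mem_of_mem_erase hb, hba, ?_, ?_, ?_⟩
  · simp [nthDist, hsort, hau]
  · simp [nthDist, hsort, hbv]
  · intro m hm
    have : d x m ∈ u ::ₘ v ::ₘ (t : Multiset ℝ) := hmap ▸ Multiset.mem_map_of_mem _ hm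
    rcases Multiset.mem_cons.mp this with h | h
    · rw [h, hau]
    · rw [hau]; exact hu _ h

end NearestMedoids

section Silhouette

variable {X : Type*} {d : X → X → ℝ} {M : Finset X} {x : X}

/-- The convention `s̃ = 1` when both distances vanish agrees with Lean's `0 / 0 = 0`. -/
lemma msil_eq_one_sub_div (d : X → X → ℝ) (M : Finset X) (x : X) :
    msil d M x = 1 - nthDist d M x 0 / nthDist d M x 1 := by
  unfold msil
  split_ifs with h
  · simp [h.1]
  · rfl

lemma msil_le_one (hM : 2 ≤ M.card) (h0 : ∀ m ∈ M, 0 ≤ d x m) : msil d M x ≤ 1 := by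
  obtain ⟨a, ha, b, hb, -, h₀, h₁, -⟩ := exists_nthDist_zero_one d M x hM
  rw [msil_eq_one_sub_div, h₀, h₁]
  linarith [div_nonneg (h0 a ha) (h0 b hb)]

lemma msil_eq_one {m : X} (hM : 2 ≤ M.card) (h0 : ∀ m ∈ M, 0 ≤ d x m) (hm : m ∈ M)
    (hdm : d x m = 0) : msil d M x = 1 := by
  obtain ⟨a, ha, -, -, -, h₀, -, hmin⟩ := exists_nthDist_zero_one d M x hM
  have hda : d x a = 0 := le_antisymm (hdm ▸ hmin m hm) (h0 a ha)
  rw [msil_eq_one_sub_div, h₀, hda, zero_div, sub_zero]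

lemma msil_le_one_sub_div {v V : ℝ} (hM : 2 ≤ M.card) (hv : 0 < v)
    (hlow : ∀ m ∈ M, v ≤ d x m) (hup : ∀ m ∈ M, d x m ≤ V) : msil d M x ≤ 1 - v / V := by
  obtain ⟨a, ha, b, hb, -, h₀, h₁, -⟩ := exists_nthDist_zero_one d M x hM
  rw [msil_eq_one_sub_div, h₀, h₁]
  have hva := hlow a ha
  have := div_le_div₀ (hv.le.trans hva) hva (hv.trans_le (hlow b hb)) (hup b hb)
  linarith

lemma one_sub_div_le_msil {v V : ℝ} {m₀ : X} (hM : 2 ≤ M.card) (hv : 0 ≤ v) (hV : 0 < V)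
    (hm₀ : m₀ ∈ M) (hnear : d x m₀ ≤ v) (hfar : ∀ m ∈ M, m ≠ m₀ → V ≤ d x m) :
    1 - v / V ≤ msil d M x := by
  obtain ⟨a, ha, b, hb, hba, h₀, h₁, hmin⟩ := exists_nthDist_zero_one d M x hM
  have hVb : V ≤ d x b := by
    by_cases hbm₀ : b = m₀
    · have hVa : V ≤ d x a := hfar a ha fun h => hba (hbm₀.trans h.symm)
      exact hVa.trans (hmin b hb)
    · exact hfar b hb hbm₀
  rw [msil_eq_one_sub_div, h₀, h₁]
  have := div_le_div₀ hv ((hmin m₀ hm₀).trans hnear) hV hVb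
  linarith

end Silhouette

section Witness

variable {X : Type*} [DecidableEq X] {M : Finset X} {m₁ : X} {N : ℝ} {x y : X}

def witnessDissim (M : Finset X) (m₁ : X) (N : ℝ) (x y : X) : ℝ :=
  if x = y then 0 else if x ∈ M ∧ y ∈ M then N else if x = m₁ ∨ y = m₁ then 1 else N ^ 2

lemma witnessDissim_self (x : X) : witnessDissim M m₁ N x x = 0 := by
  simp [witnessDissim]

lemma witnessDissim_comm (x y : X) : witnessDissim M m₁ N x y = witnessDissim M m₁ N y x := by
  simp only [witnessDissim, @eq_comm _ x y, and_comm (a := x ∈ M), or_comm (a := x = m₁)]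

lemma one_le_witnessDissim (hN : 1 ≤ N) (hxy : x ≠ y) : 1 ≤ witnessDissim M m₁ N x y := by
  rw [witnessDissim, if_neg hxy]
  split_ifs <;> nlinarith

lemma witnessDissim_nonneg (hN : 0 ≤ N) (x y : X) : 0 ≤ witnessDissim M m₁ N x y := by
  unfold witnessDissim
  split_ifs <;> positivity

lemma witnessDissim_le_sq (hN : 1 ≤ N) (x y : X) : witnessDissim M m₁ N x y ≤ N ^ 2 := by
  unfold witnessDissim
  split_ifs <;> nlinarith

lemma witnessDissim_center_le (hN : 1 ≤ N) (y : X) : witnessDissim M m₁ N m₁ y ≤ N := by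
  unfold witnessDissim
  split_ifs with _ _ h
  · linarith
  · exact le_rfl
  · exact hN
  · exact absurd (Or.inl rfl) h

lemma le_witnessDissim (hN : 1 ≤ N) (hm₁ : m₁ ∈ M) (hx : x ∈ M) (hx₁ : x ≠ m₁) (hxy : x ≠ y) :
    N ≤ witnessDissim M m₁ N x y := by
  rw [witnessDissim, if_neg hxy]
  split_ifs with hxyM h
  · exact le_rfl
  · rcases h with h | rfl
    · exact absurd h hx₁
    · exact absurd ⟨hx, hm₁⟩ hxyM
  · nlinarith

lemma witnessDissim_center (hm₁ : m₁ ∈ M) (hx : x ∉ M) : witnessDissim M m₁ N x m₁ = 1 := by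
  unfold witnessDissim
  split_ifs <;> simp_all

lemma witnessDissim_of_notMem (hm₁ : m₁ ∈ M) (hx : x ∉ M) (hy : y ∈ M) (hy₁ : y ≠ m₁) :
    witnessDissim M m₁ N x y = N ^ 2 := by
  unfold witnessDissim
  split_ifs <;> simp_all

lemma one_sub_inv_sq_le_msil_witnessDissim (hM : 2 ≤ M.card) (hm₁ : m₁ ∈ M)
    (hN : 1 ≤ N) (x : X) : 1 - 1 / N ^ 2 ≤ msil (witnessDissim M m₁ N) M x := by
  by_cases hx : x ∈ M
  · rw [msil_eq_one hM (fun m _ => witnessDissim_nonneg (by linarith) x m) hx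
      (witnessDissim_self x)]
    linarith [one_div_nonneg.mpr (sq_nonneg N)]
  · exact one_sub_div_le_msil hM zero_le_one (by positivity) hm₁
      (witnessDissim_center hm₁ hx).le
      fun m hm hm₁' => (witnessDissim_of_notMem hm₁ hx hm hm₁').ge

lemma msil_witnessDissim_le_of_notMem {M' : Finset X} {y : X} (hM' : 2 ≤ M'.card)
    (hm₁ : m₁ ∈ M) (hN : 1 ≤ N) (hy : y ∈ M) (hy' : y ∉ M') :
    msil (witnessDissim M m₁ N) M' y ≤ 1 - 1 / N := by
  have hne : ∀ m ∈ M', y ≠ m := fun m hm h => hy' (h ▸ hm)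
  by_cases hy₁ : y = m₁
  · subst hy₁
    exact msil_le_one_sub_div hM' one_pos (fun m hm => one_le_witnessDissim hN (hne m hm))
      fun m _ => witnessDissim_center_le hN m
  · have h := msil_le_one_sub_div hM' (by linarith)
      (fun m hm => le_witnessDissim hN hm₁ hy hy₁ (hne m hm))
      fun m _ => witnessDissim_le_sq hN y m
    rwa [sq, div_mul_cancel_left₀ (by positivity : N ≠ 0), ← one_div] at h

end Witness

lemma AMS_lt_AMS_of_sum_sub_msil_lt {X : Type*} [Fintype X] {d : X → X → ℝ} {M M' : Finset X}
    (h : ∑ x, (1 - msil d M x) < ∑ x, (1 - msil d M' x)) : AMS d M' < AMS d M := by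
  have hX : Nonempty X := by
    by_contra hX
    rw [not_nonempty_iff] at hX
    simp at h
  rw [Finset.sum_sub_distrib, Finset.sum_sub_distrib] at h
  exact div_lt_div_of_pos_right (by linarith) (by exact_mod_cast Fintype.card_pos)

section WitnessSilhouette

variable {X : Type*} [Fintype X] [DecidableEq X] {M : Finset X} {m₁ : X}

omit [DecidableEq X] in
lemma one_le_card_real (x : X) : (1 : ℝ) ≤ Fintype.card X :=
  Nat.one_le_cast.mpr (Fintype.card_pos_iff.mpr ⟨x⟩)

lemma sum_sub_msil_witnessDissim_lt (hM : 2 ≤ M.card) (hm₁ : m₁ ∈ M) :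
    ∑ x, (1 - msil (witnessDissim M m₁ (Fintype.card X)) M x) < 1 / Fintype.card X := by
  have hN := one_le_card_real m₁
  calc ∑ x, (1 - msil (witnessDissim M m₁ (Fintype.card X)) M x)
      < ∑ _x : X, 1 / (Fintype.card X : ℝ) ^ 2 := by
        refine Finset.sum_lt_sum (fun x _ => ?_) ⟨m₁, Finset.mem_univ _, ?_⟩
        · linarith [one_sub_inv_sq_le_msil_witnessDissim hM hm₁ hN x]
        · rw [msil_eq_one hM (fun m _ => witnessDissim_nonneg (by linarith) m₁ m) hm₁
            (witnessDissim_self m₁), sub_self]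
          positivity
    _ = 1 / Fintype.card X := by
        rw [Finset.sum_const, Finset.card_univ, nsmul_eq_mul]
        field_simp

lemma one_div_card_le_sum_sub_msil_witnessDissim {M' : Finset X} {y : X} (hM' : 2 ≤ M'.card)
    (hm₁ : m₁ ∈ M) (hy : y ∈ M) (hy' : y ∉ M') :
    1 / Fintype.card X ≤ ∑ x, (1 - msil (witnessDissim M m₁ (Fintype.card X)) M' x) := by
  have hN := one_le_card_real m₁
  calc 1 / (Fintype.card X : ℝ)
      ≤ 1 - msil (witnessDissim M m₁ (Fintype.card X)) M' y := by
        linarith [msil_witnessDissim_le_of_notMem hM' hm₁ hN hy hy']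
    _ ≤ ∑ x, (1 - msil (witnessDissim M m₁ (Fintype.card X)) M' x) :=
        Finset.single_le_sum (fun x _ => sub_nonneg.mpr
          (msil_le_one hM' fun m _ => witnessDissim_nonneg (by linarith) x m))
          (Finset.mem_univ y)

end WitnessSilhouette

theorem AMS_rich_general {X : Type*} [Fintype X] [DecidableEq X] (M : Finset X)
    (hM : 2 ≤ M.card) (hMne : M.Nonempty) :
    ∃ d : X → X → ℝ, (∀ x y, 0 ≤ d x y) ∧ (∀ x y, d x y = d y x) ∧ (∀ x, d x x = 0) ∧
      ∀ M' : Finset X, M'.card = M.card → M' ≠ M → AMS d M' < AMS d M := by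
  obtain ⟨m₁, hm₁⟩ := hMne
  have hN := one_le_card_real m₁
  refine ⟨witnessDissim M m₁ (Fintype.card X), witnessDissim_nonneg (by linarith),
    witnessDissim_comm, witnessDissim_self, fun M' hcard hne => ?_⟩
  obtain ⟨y, hy, hy'⟩ : ∃ y ∈ M, y ∉ M' :=
    Finset.not_subset.mp fun hsub => hne (Finset.eq_of_subset_of_card_le hsub hcard.le).symm
  exact AMS_lt_AMS_of_sum_sub_msil_lt <| (sum_sub_msil_witnessDissim_lt hM hm₁).trans_le <|
    one_div_card_le_sum_sub_msil_witnessDissim (hcard ▸ hM) hm₁ hy hy'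

/-- The Average Medoid Silhouette is rich: every medoid set M ⊊ X with
|M| ≥ 2 is the unique maximizer of the AMS for some dissimilarity. -/
theorem AMS_rich {X : Type*} [Fintype X] [DecidableEq X] (M : Finset X)
    (hn : 2 ≤ Fintype.card X) (hM : 2 ≤ M.card) (hMne : M.Nonempty)
    (hproper : M ≠ Finset.univ) :
    ∃ d : X → X → ℝ, (∀ x y, 0 ≤ d x y) ∧ (∀ x y, d x y = d y x) ∧ (∀ x, d x x = 0) ∧
      ∀ M' : Finset X, M'.card = M.card → M' ≠ M → AMS d M' < AMS d M :=
  AMS_rich_general M hM hMne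
end

section
/- Swap change formula, case 1 (nearest medoid replaced, new medoid closer than second nearest): if the medoid removed is the nearest medoid n_1(o) of point x_o and d(o,j) < d_2(o), then the change in Medoid Silhouette of x_o when swapping m_{n_1(o)} with x_j equals d_1(o)/d_2(o) − d(o,j)/d_2(o). -/
/-! The sorted list of distances from `o` to the medoids starts with `d₁(o) = d(o, m)`, so removing
`m` shifts it by one; since `d(o, j) < d₂(o)`, inserting `j` puts `d(o, j)` in front of the shifted
list. Hence after the swap the two smallest distances are `d(o, j)` and `d₂(o)`. -/

section NthDist

variable {X : Type*} (d : X → X → ℝ) {M : Finset X} {x : X}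

lemma nthDist_zero_le {y : X} (hy : y ∈ M) : nthDist d M x 0 ≤ d x y := by
  have hmem : d x y ∈ (M.val.map (d x)).sort (· ≤ ·) := by simpa using ⟨y, hy, rfl⟩
  obtain ⟨a, l, hl⟩ := List.exists_cons_of_ne_nil (List.ne_nil_of_mem hmem)
  have hsorted := Multiset.pairwise_sort (M.val.map (d x)) (· ≤ ·)
  rw [hl, List.pairwise_cons] at hsorted
  rw [hl, List.mem_cons] at hmem
  rw [nthDist, hl, List.getD_cons_zero]
  rcases hmem with h | h
  · exact h.ge
  · exact hsorted.1 _ h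

variable [DecidableEq X] {j : X}

lemma sort_map_insert_of_le (hj : j ∉ M) (hle : ∀ y ∈ M, d x j ≤ d x y) :
    ((insert j M).val.map (d x)).sort (· ≤ ·) = d x j :: (M.val.map (d x)).sort (· ≤ ·) := by
  rw [Finset.insert_val_of_notMem hj, Multiset.map_cons]
  exact Multiset.sort_cons _ _ _ (by simpa using hle)

lemma nthDist_insert_zero (hj : j ∉ M) (hle : ∀ y ∈ M, d x j ≤ d x y) :
    nthDist d (insert j M) x 0 = d x j := by
  rw [nthDist, sort_map_insert_of_le d hj hle, List.getD_cons_zero]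

lemma nthDist_insert_succ (hj : j ∉ M) (hle : ∀ y ∈ M, d x j ≤ d x y) (n : ℕ) :
    nthDist d (insert j M) x (n + 1) = nthDist d M x n := by
  rw [nthDist, sort_map_insert_of_le d hj hle, List.getD_cons_succ, nthDist]

lemma nthDist_succ_eq_erase {m : X} (hm : m ∈ M) (hnear : d x m = nthDist d M x 0) (n : ℕ) :
    nthDist d M x (n + 1) = nthDist d (M.erase m) x n := by
  have hle : ∀ y ∈ M.erase m, d x m ≤ d x y := fun y hy =>
    hnear ▸ nthDist_zero_le d (Finset.mem_of_mem_erase hy)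
  conv_lhs => rw [← Finset.insert_erase hm]
  exact nthDist_insert_succ d (Finset.notMem_erase m M) hle n

end NthDist

lemma msil_of_ne_zero {X : Type*} (d : X → X → ℝ) (M : Finset X) (x : X)
    (h : nthDist d M x 0 ≠ 0) : msil d M x = 1 - nthDist d M x 0 / nthDist d M x 1 :=
  if_neg fun h' => h h'.1

theorem swap_change_case1_general {X : Type*} [DecidableEq X] (d : X → X → ℝ) (M : Finset X)
    (o m j : X) (hm : m ∈ M) (hj : j ∉ M)
    (hpos : 0 < nthDist d M o 0) (hposj : 0 < d o j)
    (hnear : d o m = nthDist d M o 0)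
    (hoj : d o j < nthDist d M o 1) :
    msil d (insert j (M.erase m)) o - msil d M o
      = nthDist d M o 0 / nthDist d M o 1 - d o j / nthDist d M o 1 := by
  have hsecond : nthDist d M o 1 = nthDist d (M.erase m) o 0 :=
    nthDist_succ_eq_erase d hm hnear 0
  have hjM' : j ∉ M.erase m := fun h => hj (Finset.mem_of_mem_erase h)
  have hcloser : ∀ y ∈ M.erase m, d o j ≤ d o y := fun y hy =>
    (hoj.trans_le (hsecond ▸ nthDist_zero_le d hy)).le
  have hnew0 := nthDist_insert_zero d hjM' hcloser
  have hnew1 := nthDist_insert_succ d hjM' hcloser 0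
  rw [msil_of_ne_zero d _ o (hnew0 ▸ hposj.ne'), msil_of_ne_zero d M o hpos.ne', hnew0, hnew1,
    ← hsecond]
  ring

/-- swap change, case 1: the nearest medoid of o is replaced by x_j
with d(o,j) < d₂(o); the change equals d₁(o)/d₂(o) − d(o,j)/d₂(o). -/
theorem swap_change_case1 {X : Type*} [Fintype X] [DecidableEq X] (d : X → X → ℝ) (M : Finset X)
    (hk : 3 ≤ M.card) (o m j : X) (hm : m ∈ M) (hj : j ∉ M)
    (hinj : Set.InjOn (d o) ↑M)
    (hpos : 0 < nthDist d M o 0) (hposj : 0 < d o j)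
    (hnear : d o m = nthDist d M o 0)
    (hoj : d o j < nthDist d M o 1) :
    msil d (insert j (M.erase m)) o - msil d M o
      = nthDist d M o 0 / nthDist d M o 1 - d o j / nthDist d M o 1 :=
  swap_change_case1_general d M o m j hm hj hpos hposj hnear hoj
end

section
/- Swap change formula, case 2 (nearest medoid replaced, new medoid farther than second but closer than third nearest): if m_i = n_1(o) and d_2(o) ≤ d(o,j) < d_3(o), then Δs̃_o = d_1(o)/d_2(o) − d_2(o)/d(o,j). -/
/-! Dropping the nearest medoid removes the head of the sorted distance list, and since
d₂(o) ≤ d(o,j) ≤ d₃(o) the new medoid is inserted right behind the old second entry. So after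
the swap o's two nearest distances are d₂(o) and d(o,j), and its silhouette changes from
1 − d₁/d₂ to 1 − d₂/d(o,j). -/

theorem Finset.map_val_erase_eq_of_sort_eq_cons {X α : Type*} [DecidableEq X] [LinearOrder α]
    {M : Finset X} {f : X → α} {m : X} {t : List α} (hm : m ∈ M)
    (hsort : (M.val.map f).sort (· ≤ ·) = f m :: t) :
    (M.erase m).val.map f = t := by
  have hcons : f m ::ₘ (M.erase m).val.map f = f m ::ₘ (t : Multiset α) := by
    rw [Finset.erase_val, ← Multiset.map_cons, Multiset.cons_erase hm, ← Multiset.sort_eq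
      (M.val.map f) (· ≤ ·), hsort, Multiset.cons_coe]
  exact (Multiset.cons_inj_right _).1 hcons

theorem nthDist_insert_erase_nearest {X : Type*} [DecidableEq X] {d : X → X → ℝ}
    {M : Finset X} {x m j : X} (hk : 3 ≤ M.card) (hm : m ∈ M) (hj : j ∉ M)
    (hnear : d x m = nthDist d M x 0)
    (h₁ : nthDist d M x 1 ≤ d x j) (h₂ : d x j ≤ nthDist d M x 2) :
    nthDist d (insert j (M.erase m)) x 0 = nthDist d M x 1 ∧
      nthDist d (insert j (M.erase m)) x 1 = d x j := by
  obtain ⟨a, b, c, t, hL⟩ : ∃ a b c t, (M.val.map (d x)).sort (· ≤ ·) = a :: b :: c :: t := by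
    have hlen : 3 ≤ ((M.val.map (d x)).sort (· ≤ ·)).length := by
      rw [Multiset.length_sort, Multiset.card_map]
      exact hk
    match (M.val.map (d x)).sort (· ≤ ·), hlen with
    | a :: b :: c :: t, _ => exact ⟨a, b, c, t, rfl⟩
  have hsorted := hL ▸ Multiset.pairwise_sort (M.val.map (d x)) (· ≤ ·)
  simp only [nthDist, hL] at hnear h₁ h₂ ⊢
  obtain ⟨hb, hct⟩ := List.pairwise_cons.1 (List.pairwise_cons.1 hsorted).2
  have hc := (List.pairwise_cons.1 hct).1
  have hjb : b ≤ d x j := h₁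
  have hjc : ∀ y ∈ (c :: t : Multiset ℝ), d x j ≤ y := by
    simp only [Multiset.mem_coe]
    exact List.forall_mem_cons.2 ⟨h₂, fun y hy => h₂.trans (hc y hy)⟩
  have herase : (M.erase m).val.map (d x) = b ::ₘ (c :: t : Multiset ℝ) :=
    Finset.map_val_erase_eq_of_sort_eq_cons hm (hnear ▸ hL)
  have hsort' : ((insert j (M.erase m)).val.map (d x)).sort (· ≤ ·)
      = b :: d x j :: ((c :: t : Multiset ℝ)).sort (· ≤ ·) := by
    rw [Finset.insert_val_of_notMem (fun h => hj (Finset.mem_of_mem_erase h)),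
      Multiset.map_cons, herase, Multiset.cons_swap, Multiset.sort_cons,
      Multiset.sort_cons _ _ _ hjc]
    exact Multiset.forall_mem_cons.2 ⟨hjb, by simpa only [Multiset.mem_coe] using hb⟩
  simp only [hsort']
  exact ⟨rfl, rfl⟩

theorem swap_change_case2_general {X : Type*} [DecidableEq X] (d : X → X → ℝ) (M : Finset X)
    (hk : 3 ≤ M.card) (o m j : X) (hm : m ∈ M) (hj : j ∉ M)
    (hpos : 0 < nthDist d M o 0) (hposj : 0 < d o j)
    (hnear : d o m = nthDist d M o 0)
    (hoj1 : nthDist d M o 1 ≤ d o j) (hoj2 : d o j < nthDist d M o 2) :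
    msil d (insert j (M.erase m)) o - msil d M o
      = nthDist d M o 0 / nthDist d M o 1 - nthDist d M o 1 / d o j := by
  obtain ⟨h₀', h₁'⟩ := nthDist_insert_erase_nearest hk hm hj hnear hoj1 hoj2.le
  rw [msil, msil, h₀', h₁', if_neg (fun h => hposj.ne' h.2), if_neg (fun h => hpos.ne' h.1)]
  ring

/-- swap change, case 2: nearest medoid replaced,
d₂(o) ≤ d(o,j) < d₃(o); change equals d₁/d₂ − d₂/d(o,j). -/
theorem swap_change_case2 {X : Type*} [Fintype X] [DecidableEq X] (d : X → X → ℝ) (M : Finset X)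
    (hk : 3 ≤ M.card) (o m j : X) (hm : m ∈ M) (hj : j ∉ M)
    (hinj : Set.InjOn (d o) ↑M)
    (hpos : 0 < nthDist d M o 0) (hposj : 0 < d o j)
    (hnear : d o m = nthDist d M o 0)
    (hoj1 : nthDist d M o 1 ≤ d o j) (hoj2 : d o j < nthDist d M o 2) :
    msil d (insert j (M.erase m)) o - msil d M o
      = nthDist d M o 0 / nthDist d M o 1 - nthDist d M o 1 / d o j :=
  swap_change_case2_general d M hk o m j hm hj hpos hposj hnear hoj1 hoj2
end

section
/- Swap change formula, case 3 (nearest medoid replaced, new medoid farther than third nearest): if m_i = n_1(o) and d(o,j) ≥ d_3(o), then Δs̃_o = d_1(o)/d_2(o) − d_2(o)/d_3(o). -/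
/-! Removing the nearest medoid drops the head `d₁` of the sorted distance list of `o`, leaving
`d₂, d₃, …`; since `d(o, j) ≥ d₃`, inserting `j` does not disturb these first two entries. Hence
`s̃_o` goes from `1 - d₁/d₂` to `1 - d₂/d₃`. -/

namespace Multiset

variable {α ι : Type*} [LinearOrder α]

theorem sort_cons_cons_cons_of_le {x b c : α} {t : List α}
    (hsorted : (b :: c :: t).Pairwise (· ≤ ·)) (hcx : c ≤ x) :
    (x ::ₘ (↑(b :: c :: t) : Multiset α)).sort (· ≤ ·)
      = b :: c :: (x ::ₘ (t : Multiset α)).sort (· ≤ ·) := by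
  simp only [List.pairwise_cons, List.mem_cons] at hsorted
  obtain ⟨hb, hc, -⟩ := hsorted
  have hbc : b ≤ c := hb c (.inl rfl)
  rw [← cons_coe, ← cons_coe, cons_swap x, cons_swap x, sort_cons, sort_cons]
  · simpa [or_imp, forall_and] using ⟨hcx, hc⟩
  · simpa [or_imp, forall_and] using ⟨hbc, hbc.trans hcx, fun y hy => hb y (.inr hy)⟩

theorem map_erase_eq_of_sort_map_eq_cons [DecidableEq ι] {f : ι → α} {s : Multiset ι} {i : ι}
    (hi : i ∈ s) {l : List α} (h : (s.map f).sort (· ≤ ·) = f i :: l) :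
    (s.erase i).map f = l := by
  have hcons : f i ::ₘ (s.erase i).map f = f i ::ₘ (l : Multiset α) := by
    rw [← map_cons, cons_erase hi, ← sort_eq (s.map f) (· ≤ ·), h, cons_coe]
  exact (cons_inj_right _).mp hcons

end Multiset

theorem Finset.sort_map_insert_erase_of_le {α ι : Type*} [LinearOrder α] [DecidableEq ι]
    {f : ι → α} {s : Finset ι} {i k : ι} (hi : i ∈ s) (hk : k ∉ s) {b c : α} {t : List α}
    (hsort : (s.val.map f).sort (· ≤ ·) = f i :: b :: c :: t) (hck : c ≤ f k) :
    ((insert k (s.erase i)).val.map f).sort (· ≤ ·)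
      = b :: c :: (f k ::ₘ (t : Multiset α)).sort (· ≤ ·) := by
  have hsorted := hsort ▸ Multiset.pairwise_sort (s.val.map f) (· ≤ ·)
  rw [insert_val_of_notMem (fun h => hk (mem_of_mem_erase h)), erase_val, Multiset.map_cons,
    Multiset.map_erase_eq_of_sort_map_eq_cons hi hsort]
  exact Multiset.sort_cons_cons_cons_of_le hsorted.of_cons hck

theorem List.exists_eq_cons_cons_cons_of_three_le_length {α : Type*} {l : List α}
    (h : 3 ≤ l.length) : ∃ a b c t, l = a :: b :: c :: t :=
  match l, h with
  | a :: b :: c :: t, _ => ⟨a, b, c, t, rfl⟩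

theorem msil_of_pos {X : Type*} {d : X → X → ℝ} {M : Finset X} {x : X}
    (h : 0 < nthDist d M x 0) : msil d M x = 1 - nthDist d M x 0 / nthDist d M x 1 :=
  if_neg fun h0 => h.ne' h0.1

theorem swap_change_case3_general {X : Type*} [DecidableEq X] (d : X → X → ℝ) (M : Finset X)
    (hk : 3 ≤ M.card) (o m j : X) (hm : m ∈ M) (hj : j ∉ M)
    (hpos : 0 < nthDist d M o 0)
    (hnear : d o m = nthDist d M o 0)
    (hoj : nthDist d M o 2 ≤ d o j) :
    msil d (insert j (M.erase m)) o - msil d M o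
      = nthDist d M o 0 / nthDist d M o 1 - nthDist d M o 1 / nthDist d M o 2 := by
  obtain ⟨a, b, c, t, hsort⟩ := List.exists_eq_cons_cons_cons_of_three_le_length
    (l := (M.val.map (d o)).sort (· ≤ ·)) (by simpa using hk)
  have hab : a ≤ b :=
    List.rel_of_pairwise_cons (hsort ▸ Multiset.pairwise_sort _ _) List.mem_cons_self
  have hd₀ : nthDist d M o 0 = a := by rw [nthDist, hsort]; rfl
  have hd₁ : nthDist d M o 1 = b := by rw [nthDist, hsort]; rfl
  have hd₂ : nthDist d M o 2 = c := by rw [nthDist, hsort]; rfl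
  rw [hd₀] at hpos hnear
  rw [hd₂] at hoj
  have hnew := Finset.sort_map_insert_erase_of_le hm hj (hnear ▸ hsort) hoj
  have hd₀' : nthDist d (insert j (M.erase m)) o 0 = b := by rw [nthDist, hnew]; rfl
  have hd₁' : nthDist d (insert j (M.erase m)) o 1 = c := by rw [nthDist, hnew]; rfl
  rw [msil_of_pos (hd₀' ▸ hpos.trans_le hab), msil_of_pos (hd₀ ▸ hpos), hd₀', hd₁', hd₀, hd₁, hd₂]
  ring

/-- swap change, case 3: nearest medoid replaced, d(o,j) ≥ d₃(o);
change equals d₁/d₂ − d₂/d₃. -/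
theorem swap_change_case3 {X : Type*} [Fintype X] [DecidableEq X] (d : X → X → ℝ) (M : Finset X)
    (hk : 3 ≤ M.card) (o m j : X) (hm : m ∈ M) (hj : j ∉ M)
    (hinj : Set.InjOn (d o) ↑M)
    (hpos : 0 < nthDist d M o 0) (hposj : 0 < d o j)
    (hnear : d o m = nthDist d M o 0)
    (hoj : nthDist d M o 2 ≤ d o j) :
    msil d (insert j (M.erase m)) o - msil d M o
      = nthDist d M o 0 / nthDist d M o 1 - nthDist d M o 1 / nthDist d M o 2 :=
  swap_change_case3_general d M hk o m j hm hj hpos hnear hoj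
end

section
/- Swap change formula, case 6 (neither of the two nearest replaced, new medoid farther than second nearest): if m_i ∉ {n_1(o), n_2(o)} and d(o,j) ≥ d_2(o), then Δs̃_o = 0. -/
namespace Multiset

variable {α : Type*} [LinearOrder α]

theorem sort_cons_erase_of_lt {s : Multiset α} {a b x y : α} {rest : List α}
    (hs : s.sort (· ≤ ·) = a :: b :: rest) (hx : x ∈ s) (hbx : b < x) (hby : b ≤ y) :
    (y ::ₘ s.erase x).sort (· ≤ ·) = a :: b :: (y ::ₘ (rest : Multiset α).erase x).sort (· ≤ ·) := by
  have hsorted := s.pairwise_sort (· ≤ ·)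
  rw [hs, List.pairwise_cons, List.pairwise_cons] at hsorted
  obtain ⟨ha, hb, -⟩ := hsorted
  have hab : a ≤ b := ha b List.mem_cons_self
  have hs' : s = a ::ₘ b ::ₘ (rest : Multiset α) := by
    rw [← s.sort_eq (· ≤ ·), hs]; rfl
  have hx_rest : x ∈ (rest : Multiset α) := by
    rw [hs'] at hx
    rcases mem_cons.mp hx with rfl | hx
    · exact absurd hbx (not_lt.mpr hab)
    rcases mem_cons.mp hx with rfl | hx
    · exact absurd hbx (lt_irrefl x)
    · exact hx
  have hrest : ∀ z ∈ y ::ₘ (rest : Multiset α).erase x, b ≤ z := by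
    intro z hz
    rcases mem_cons.mp hz with rfl | hz
    · exact hby
    · exact hb z (mem_coe.mp (mem_of_mem_erase hz))
  have herase : y ::ₘ s.erase x = a ::ₘ b ::ₘ (y ::ₘ (rest : Multiset α).erase x) := by
    rw [hs', erase_cons_tail_of_mem (mem_cons_of_mem hx_rest), erase_cons_tail_of_mem hx_rest,
      cons_swap y a, cons_swap y b]
  have hbelow : ∀ z ∈ b ::ₘ (y ::ₘ (rest : Multiset α).erase x), a ≤ z := by
    intro z hz
    rcases mem_cons.mp hz with rfl | hz
    · exact hab
    · exact hab.trans (hrest z hz)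
  rw [herase, sort_cons _ _ _ hbelow, sort_cons _ _ _ hrest]

theorem getD_sort_cons_erase_of_lt {s : Multiset α} (hs : 2 ≤ card s) (z : α) {x y : α}
    (hx : x ∈ s) (hx_far : (s.sort (· ≤ ·)).getD 1 z < x) (hy_far : (s.sort (· ≤ ·)).getD 1 z ≤ y)
    {n : ℕ} (hn : n < 2) :
    ((y ::ₘ s.erase x).sort (· ≤ ·)).getD n z = (s.sort (· ≤ ·)).getD n z := by
  obtain ⟨a, b, rest, hsort⟩ : ∃ a b rest, s.sort (· ≤ ·) = a :: b :: rest := by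
    have hlen := length_sort (s := s) (· ≤ ·)
    rcases h : s.sort (· ≤ ·) with _ | ⟨a, _ | ⟨b, rest⟩⟩
    · rw [h] at hlen; simp only [List.length_nil] at hlen; omega
    · rw [h] at hlen; simp only [List.length_singleton] at hlen; omega
    · exact ⟨a, b, rest, rfl⟩
  rw [hsort] at hx_far hy_far ⊢
  rw [sort_cons_erase_of_lt hsort hx hx_far hy_far]
  interval_cases n <;> rfl

end Multiset

theorem nthDist_insert_erase_of_lt {X : Type*} [DecidableEq X] (d : X → X → ℝ) {M : Finset X}
    (hk : 2 ≤ M.card) {o m j : X} (hm : m ∈ M) (hj : j ∉ M)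
    (hfar : nthDist d M o 1 < d o m) (hoj : nthDist d M o 1 ≤ d o j) {n : ℕ} (hn : n < 2) :
    nthDist d (insert j (M.erase m)) o n = nthDist d M o n := by
  have hval : (insert j (M.erase m)).val.map (d o) = d o j ::ₘ (M.val.map (d o)).erase (d o m) := by
    rw [Finset.insert_val_of_notMem (fun h => hj (Finset.mem_of_mem_erase h)), Finset.erase_val,
      Multiset.map_cons, Multiset.map_erase_of_mem _ _ hm]
  unfold nthDist at hfar hoj ⊢
  rw [hval]
  exact Multiset.getD_sort_cons_erase_of_lt (by simpa using hk) 0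
    (Multiset.mem_map_of_mem _ hm) hfar hoj hn

theorem swap_change_case6_general {X : Type*} [DecidableEq X] (d : X → X → ℝ) (M : Finset X)
    (hk : 3 ≤ M.card) (o m j : X) (hm : m ∈ M) (hj : j ∉ M)
    (hfar : nthDist d M o 1 < d o m)
    (hoj : nthDist d M o 1 ≤ d o j) :
    msil d (insert j (M.erase m)) o - msil d M o = 0 := by
  have hk2 : 2 ≤ M.card := by omega
  rw [msil, msil, nthDist_insert_erase_of_lt d hk2 hm hj hfar hoj (by norm_num : 0 < 2),
    nthDist_insert_erase_of_lt d hk2 hm hj hfar hoj (by norm_num : 1 < 2), sub_self]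

/-- swap change, case 6: a medoid that is neither of the two nearest of o
is replaced and the new medoid is farther than the second nearest; change is 0. -/
theorem swap_change_case6 {X : Type*} [Fintype X] [DecidableEq X] (d : X → X → ℝ) (M : Finset X)
    (hk : 3 ≤ M.card) (o m j : X) (hm : m ∈ M) (hj : j ∉ M)
    (hinj : Set.InjOn (d o) ↑M)
    (hpos : 0 < nthDist d M o 0) (hposj : 0 < d o j)
    (hfar : nthDist d M o 1 < d o m)
    (hoj : nthDist d M o 1 ≤ d o j) :
    msil d (insert j (M.erase m)) o - msil d M o = 0 :=
  swap_change_case6_general d M hk o m j hm hj hfar hoj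
end
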